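/- Let n ≥ 2 and let u, v be distinct vertices of {1,…,n}. For the single community graph G_1: (a) P{d_1(v) = 1 and d_1(u) = 1} ≤ E[X̃² Q]/n; (b) P{d_1(v) = 1 and d_1(u) = 0} ≤ τ_n/n; (c) P{d_1(v) = 0 and d_1(u) = 0} = 1 − 2κ_n/n + Δ/(n(n−1)) for some real Δ satisfying 0 ≤ Δ ≤ E[(X̃)_2 (1 − (1−Q)^{X̃−1})]. -/

import Mathlib

open MeasureTheory Filter

noncomputable section

namespace SuperpositionKConn

/-- `h(x,q) = 1 - (1-q)^((x-1)_+)` (with `0^0 = 1`); here `x - 1` is truncated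
natural subtraction, which realizes `(x-1)_+`. -/
def hfun (x : ℕ) (q : ℝ) : ℝ := 1 - (1 - q) ^ (x - 1)

/-- The falling factorial `(x)_2 = x(x-1)` as a real number. -/
def fall2 (x : ℕ) : ℝ := (x : ℝ) * ((x : ℝ) - 1)

/-- `κ* = E[X h(X,Q)]`, where `μ` is the joint law of `(X,Q)`. -/
def kappaStar (μ : Measure (ℕ × ℝ)) : ℝ := ∫ p, (p.1 : ℝ) * hfun p.1 p.2 ∂μ

/-- `κ_n = E[X̃ h(X̃,Q)]`, where `X̃ = min(X,n)`. -/
def kappaN (μ : Measure (ℕ × ℝ)) (n : ℕ) : ℝ :=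
  ∫ p, (min p.1 n : ℝ) * hfun (min p.1 n) p.2 ∂μ

/-- `τ* = E[(X)_2 Q (1-Q)^(X-2)]`. -/
def tauStar (μ : Measure (ℕ × ℝ)) : ℝ :=
  ∫ p, fall2 p.1 * p.2 * (1 - p.2) ^ (p.1 - 2) ∂μ

/-- `τ_n = E[(X̃)_2 Q (1-Q)^(X̃-2)]`, where `X̃ = min(X,n)`. -/
def tauN (μ : Measure (ℕ × ℝ)) (n : ℕ) : ℝ :=
  ∫ p, fall2 (min p.1 n) * p.2 * (1 - p.2) ^ (min p.1 n - 2) ∂μ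

/-- `α = E[Q · 1_{X ≥ 2}]`. -/
def alphaPar (μ : Measure (ℕ × ℝ)) : ℝ := ∫ p in {p : ℕ × ℝ | 2 ≤ p.1}, p.2 ∂μ

/-- `λ*_{n,m,k} = ln n + (k-1) ln(m/n) - (m/n) κ*`. -/
def lamStar (μ : Measure (ℕ × ℝ)) (n m k : ℕ) : ℝ :=
  Real.log n + ((k : ℝ) - 1) * Real.log ((m : ℝ) / n) - ((m : ℝ) / n) * kappaStar μ

/-- `λ_{n,m,k} = ln n + (k-1) ln(m/n) - (m/n) κ_n`. -/
def lamN (μ : Measure (ℕ × ℝ)) (n m k : ℕ) : ℝ :=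
  Real.log n + ((k : ℝ) - 1) * Real.log ((m : ℝ) / n) - ((m : ℝ) / n) * kappaN μ n

/-- `m = Θ(n ln n)`:  `m n / (n ln n)` is eventually bounded between two positive constants. -/
def IsThetaNLogN (m : ℕ → ℕ) : Prop :=
  ∃ c₁ c₂ : ℝ, 0 < c₁ ∧ 0 < c₂ ∧ ∀ᶠ n : ℕ in atTop,
    c₁ * ((n : ℝ) * Real.log n) ≤ (m n : ℝ) ∧ (m n : ℝ) ≤ c₂ * ((n : ℝ) * Real.log n)

instance (n : ℕ) : MeasurableSpace (Equiv.Perm (Fin n)) := ⊤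

/-- The uniform distribution on `[0,1]`. -/
def unif01 : Measure ℝ := volume.restrict (Set.Icc 0 1)

instance : IsProbabilityMeasure unif01 := ⟨by simp [unif01, Real.volume_Icc]⟩

/-- The uniform distribution on permutations of `Fin n`. -/
def permMeasure (n : ℕ) : Measure (Equiv.Perm (Fin n)) :=
  (@PMF.uniformOfFintype (Equiv.Perm (Fin n)) _ ⟨1⟩).toMeasure

instance (n : ℕ) : IsProbabilityMeasure (permMeasure n) := by
  unfold permMeasure; infer_instance

/-- Sample space describing one community graph on the vertex set `Fin n`:
a sampled pair `(X,Q)`, a uniform random permutation used to pick the vertex set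
(the community's vertex set is the image under the permutation of the first
`min X n` indices, hence a uniformly distributed subset of size `min X n`),
and i.i.d. uniform `[0,1]` labels on potential edges (an edge is present iff its
label is `≤ Q`). -/
abbrev CommSpace (n : ℕ) : Type :=
  (ℕ × ℝ) × Equiv.Perm (Fin n) × (Sym2 (Fin n) → ℝ)

/-- The law of one community. -/
def commMeasure (μ : Measure (ℕ × ℝ)) (n : ℕ) : Measure (CommSpace n) :=
  μ.prod ((permMeasure n).prod (Measure.pi fun _ : Sym2 (Fin n) => unif01))

instance (μ : Measure (ℕ × ℝ)) [IsProbabilityMeasure μ] (n : ℕ) :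
    IsProbabilityMeasure (commMeasure μ n) := by
  unfold commMeasure; infer_instance

/-- Vertex `v` belongs to the community's vertex set. -/
def inComm {n : ℕ} (ω : CommSpace n) (v : Fin n) : Prop :=
  ((ω.2.1.symm v : Fin n) : ℕ) < min ω.1.1 n

/-- `u` and `v` are adjacent in the community graph. -/
def commAdj {n : ℕ} (ω : CommSpace n) (u v : Fin n) : Prop :=
  u ≠ v ∧ inComm ω u ∧ inComm ω v ∧ ω.2.2 s(u, v) ≤ ω.1.2

/-- The degree of `v` in the community graph (`0` if `v` is outside the community). -/
def commDeg {n : ℕ} (ω : CommSpace n) (v : Fin n) : ℕ :=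
  Set.ncard {u | commAdj ω v u}

/-- Sample space for `m` independent communities on `Fin n`. -/
abbrev Sample (n m : ℕ) : Type := Fin m → CommSpace n

/-- The joint law of the `m` i.i.d. communities. -/
def sampleMeasure (μ : Measure (ℕ × ℝ)) (n m : ℕ) : Measure (Sample n m) :=
  Measure.pi fun _ : Fin m => commMeasure μ n

instance (μ : Measure (ℕ × ℝ)) [IsProbabilityMeasure μ] (n m : ℕ) :
    IsProbabilityMeasure (sampleMeasure μ n m) := by
  unfold sampleMeasure; infer_instance

/-- The union graph `G_{[n,m]}`. -/
def unionGraph {n m : ℕ} (ω : Sample n m) : SimpleGraph (Fin n) where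
  Adj u v := ∃ i, commAdj (ω i) u v
  symm := by
    constructor
    intro u v h
    simp only [commAdj] at h ⊢
    obtain ⟨i, hne, hu, hv, he⟩ := h
    exact ⟨i, hne.symm, hv, hu, by rwa [Sym2.eq_swap] at he⟩
  loopless := by
    constructor
    intro v h
    simp only [commAdj] at h
    obtain ⟨i, hne, -⟩ := h
    exact hne rfl

/-- The degree of `v` in the union graph `G_{[n,m]}`. -/
def deg {n m : ℕ} (ω : Sample n m) (v : Fin n) : ℕ :=
  Set.ncard {u | (unionGraph ω).Adj v u}

/-- `N_t`: the number of vertices of degree `t` in `G_{[n,m]}`. -/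
def Ndeg {n m : ℕ} (ω : Sample n m) (t : ℕ) : ℕ :=
  Set.ncard {v | deg ω v = t}

/-- `S(v) = Σ_{i=1}^m d_i(v)`. -/
def Sdeg {n m : ℕ} (ω : Sample n m) (v : Fin n) : ℕ :=
  ∑ i, commDeg (ω i) v

/-- The event `D(v) = {S(v) = k-1 and d_i(v) ∈ {0,1} for all i}`. -/
def Devent {n m : ℕ} (k : ℕ) (ω : Sample n m) (v : Fin n) : Prop :=
  Sdeg ω v = k - 1 ∧ ∀ i, commDeg (ω i) v ≤ 1

/-- `N'_{k-1}`: the number of vertices with property `D`. -/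
def Nprime {n m : ℕ} (k : ℕ) (ω : Sample n m) : ℕ :=
  Set.ncard {v | Devent k ω v}

/-- A graph is vertex `k`-connected if the removal of any `k-1` vertices does not
disconnect it. -/
def VertexKConnected {V : Type*} [Fintype V] [DecidableEq V] (G : SimpleGraph V) (k : ℕ) : Prop :=
  ∀ S : Finset V, S.card ≤ k - 1 → (G.induce (↑(Sᶜ) : Set V)).Connected

/-- A graph is edge `k`-connected if the removal of any `k-1` edges does not
disconnect it. -/
def EdgeKConnected {V : Type*} (G : SimpleGraph V) (k : ℕ) : Prop :=
  ∀ E : Finset (Sym2 V), E.card ≤ k - 1 → (G.deleteEdges ↑E).Connected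

end SuperpositionKConn


namespace SuperpositionKConn

open Set

variable {n : ℕ}

/-- The edge-label measure. -/
def edgeM (n : ℕ) : Measure (Sym2 (Fin n) → ℝ) := Measure.pi fun _ : Sym2 (Fin n) => unif01

instance (n : ℕ) : IsProbabilityMeasure (edgeM n) := by unfold edgeM; infer_instance

lemma unif01_apply (S : Set ℝ) : unif01 S = volume (S ∩ Set.Icc 0 1) :=
  Measure.restrict_apply' measurableSet_Icc

lemma unif01_Ioi {q : ℝ} (h0 : 0 ≤ q) (h1 : q ≤ 1) :
    unif01 (Set.Ioi q) = ENNReal.ofReal (1 - q) := by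
  rw [unif01_apply]
  have : Set.Ioi q ∩ Set.Icc 0 1 = Set.Ioc q 1 := by
    ext x
    simp only [Set.mem_inter_iff, Set.mem_Ioi, Set.mem_Icc, Set.mem_Ioc]
    constructor
    · rintro ⟨h, _, h2⟩; exact ⟨h, h2⟩
    · rintro ⟨h, h2⟩; exact ⟨h, le_trans h0 h.le, h2⟩
  rw [this, Real.volume_Ioc]

lemma unif01_Iic {q : ℝ} (h0 : 0 ≤ q) (h1 : q ≤ 1) :
    unif01 (Set.Iic q) = ENNReal.ofReal q := by
  rw [unif01_apply]
  have : Set.Iic q ∩ Set.Icc 0 1 = Set.Icc 0 q := by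
    ext x
    simp only [Set.mem_inter_iff, Set.mem_Iic, Set.mem_Icc]
    constructor
    · rintro ⟨h, h2, _⟩; exact ⟨h2, h⟩
    · rintro ⟨h2, h⟩; exact ⟨h, h2, le_trans h h1⟩
  rw [this, Real.volume_Icc, sub_zero]

end SuperpositionKConn

namespace SuperpositionKConn

open Set Finset

variable {n : ℕ}

lemma sym2_mk_injective (v : Fin n) : Function.Injective (fun w => s(v, w)) := by
  intro a b h
  exact Sym2.congr_right.mp h

lemma measurableSet_forall_gt (v : Fin n) (q : ℝ) (B : Finset (Fin n)) :
    MeasurableSet {f : Sym2 (Fin n) → ℝ | ∀ w ∈ B, q < f s(v, w)} := by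
  have : {f : Sym2 (Fin n) → ℝ | ∀ w ∈ B, q < f s(v, w)}
      = ⋂ w ∈ B, {f : Sym2 (Fin n) → ℝ | q < f s(v, w)} := by
    ext f; simp
  rw [this]
  exact MeasurableSet.biInter (B : Set (Fin n)).to_countable fun w _ =>
    measurable_pi_apply s(v, w) measurableSet_Ioi

lemma measurableSet_cyl (v : Fin n) (q : ℝ) (A B : Finset (Fin n)) :
    MeasurableSet {f : Sym2 (Fin n) → ℝ |
      (∀ w ∈ A, f s(v, w) ≤ q) ∧ ∀ w ∈ B, q < f s(v, w)} := by
  have : {f : Sym2 (Fin n) → ℝ | (∀ w ∈ A, f s(v, w) ≤ q) ∧ ∀ w ∈ B, q < f s(v, w)}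
      = (⋂ w ∈ A, {f : Sym2 (Fin n) → ℝ | f s(v, w) ≤ q}) ∩
        ⋂ w ∈ B, {f : Sym2 (Fin n) → ℝ | q < f s(v, w)} := by
    ext f; simp [forall_and]
  rw [this]
  exact (MeasurableSet.biInter (A : Set (Fin n)).to_countable fun w _ =>
      measurable_pi_apply s(v, w) measurableSet_Iic).inter
    (MeasurableSet.biInter (B : Set (Fin n)).to_countable fun w _ =>
      measurable_pi_apply s(v, w) measurableSet_Ioi)

lemma edgeM_cylinder (v : Fin n) {q : ℝ} (h0 : 0 ≤ q) (h1 : q ≤ 1)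
    (A B : Finset (Fin n)) (hAB : Disjoint A B) :
    edgeM n {f | (∀ w ∈ A, f s(v, w) ≤ q) ∧ ∀ w ∈ B, q < f s(v, w)}
      = ENNReal.ofReal q ^ A.card * ENNReal.ofReal (1 - q) ^ B.card := by
  classical
  set e : Fin n → Sym2 (Fin n) := fun w => s(v, w) with he
  have einj : Function.Injective e := sym2_mk_injective v
  set Bs : Sym2 (Fin n) → Set ℝ := fun i =>
    if i ∈ A.image e then Set.Iic q else if i ∈ B.image e then Set.Ioi q else Set.univ with hBs
  have hdisj : Disjoint (A.image e) (B.image e) := (Finset.disjoint_image einj).mpr hAB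
  have hset : {f : Sym2 (Fin n) → ℝ | (∀ w ∈ A, f s(v, w) ≤ q) ∧ ∀ w ∈ B, q < f s(v, w)}
      = Set.pi Set.univ Bs := by
    ext f
    simp only [Set.mem_setOf_eq, Set.mem_pi, Set.mem_univ, true_implies]
    constructor
    · rintro ⟨hA, hB⟩ i
      simp only [hBs]
      split_ifs with hiA hiB
      · obtain ⟨w, hw, rfl⟩ := Finset.mem_image.mp hiA
        exact hA w hw
      · obtain ⟨w, hw, rfl⟩ := Finset.mem_image.mp hiB
        exact hB w hw
      · trivial
    · intro h
      constructor
      · intro w hw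
        have := h (e w)
        have hmem : e w ∈ A.image e := Finset.mem_image_of_mem e hw
        simpa only [hBs, if_pos hmem, Set.mem_Iic] using this
      · intro w hw
        have := h (e w)
        have hmemB : e w ∈ B.image e := Finset.mem_image_of_mem e hw
        have hmemA : e w ∉ A.image e := fun hc => (Finset.disjoint_left.mp hdisj) hc hmemB
        simpa only [hBs, if_neg hmemA, if_pos hmemB, Set.mem_Ioi] using this
  rw [hset]
  unfold edgeM
  rw [Measure.pi_pi]
  have hprod : ∀ i ∈ (A.image e ∪ B.image e : Finset (Sym2 (Fin n))),
      unif01 (Bs i) = if i ∈ A.image e then ENNReal.ofReal q else ENNReal.ofReal (1 - q) := by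
    intro i hi
    rcases Finset.mem_union.mp hi with hiA | hiB
    · simp only [hBs, if_pos hiA]
      exact unif01_Iic h0 h1
    · have hiA : i ∉ A.image e := fun hc => (Finset.disjoint_left.mp hdisj) hc hiB
      simp only [hBs, if_neg hiA, if_pos hiB]
      exact unif01_Ioi h0 h1
  rw [← Finset.prod_subset (Finset.subset_univ (A.image e ∪ B.image e))]
  · rw [Finset.prod_congr rfl hprod, Finset.prod_union hdisj]
    have h1' : ∏ i ∈ A.image e, (if i ∈ A.image e then ENNReal.ofReal q
        else ENNReal.ofReal (1 - q)) = ENNReal.ofReal q ^ A.card := by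
      rw [Finset.prod_congr rfl fun i hi => if_pos hi, Finset.prod_const,
        Finset.card_image_of_injective _ einj]
    have h2' : ∏ i ∈ B.image e, (if i ∈ A.image e then ENNReal.ofReal q
        else ENNReal.ofReal (1 - q)) = ENNReal.ofReal (1 - q) ^ B.card := by
      rw [Finset.prod_congr rfl fun i hi =>
        if_neg (fun hc => (Finset.disjoint_left.mp hdisj) hc hi), Finset.prod_const,
        Finset.card_image_of_injective _ einj]
    rw [h1', h2']
  · intro i _ hi
    have h1 : i ∉ A.image e := fun hc => hi (Finset.mem_union_left _ hc)
    have h2 : i ∉ B.image e := fun hc => hi (Finset.mem_union_right _ hc)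
    simp only [hBs, if_neg h1, if_neg h2]
    exact measure_univ

lemma edgeM_forall_gt (v : Fin n) {q : ℝ} (h0 : 0 ≤ q) (h1 : q ≤ 1) (B : Finset (Fin n)) :
    edgeM n {f | ∀ w ∈ B, q < f s(v, w)} = ENNReal.ofReal (1 - q) ^ B.card := by
  have := edgeM_cylinder v h0 h1 ∅ B (Finset.disjoint_empty_left B)
  simpa using this

lemma edgeM_exists_le (v : Fin n) {q : ℝ} (h0 : 0 ≤ q) (h1 : q ≤ 1) (B : Finset (Fin n)) :
    edgeM n {f | ∃ w ∈ B, f s(v, w) ≤ q} = 1 - ENNReal.ofReal (1 - q) ^ B.card := by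
  have hc : {f : Sym2 (Fin n) → ℝ | ∃ w ∈ B, f s(v, w) ≤ q}
      = {f : Sym2 (Fin n) → ℝ | ∀ w ∈ B, q < f s(v, w)}ᶜ := by
    ext f
    simp only [Set.mem_setOf_eq, Set.mem_compl_iff, not_forall, not_lt, exists_prop]
  rw [hc, prob_compl_eq_one_sub (measurableSet_forall_gt v q B),
    edgeM_forall_gt v h0 h1 B]

lemma edgeM_exactly_one (v : Fin n) {q : ℝ} (h0 : 0 ≤ q) (h1 : q ≤ 1) (W : Finset (Fin n)) :
    edgeM n {f | ∃ w₀ ∈ W, f s(v, w₀) ≤ q ∧ ∀ w ∈ W.erase w₀, q < f s(v, w)}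
      = W.card * (ENNReal.ofReal q * ENNReal.ofReal (1 - q) ^ (W.card - 1)) := by
  classical
  set S : Fin n → Set (Sym2 (Fin n) → ℝ) := fun w₀ =>
    {f | (∀ w ∈ ({w₀} : Finset (Fin n)), f s(v, w) ≤ q) ∧ ∀ w ∈ W.erase w₀, q < f s(v, w)}
    with hS
  have hset : {f : Sym2 (Fin n) → ℝ | ∃ w₀ ∈ W, f s(v, w₀) ≤ q ∧
      ∀ w ∈ W.erase w₀, q < f s(v, w)} = ⋃ w₀ ∈ W, S w₀ := by
    ext f
    simp only [Set.mem_setOf_eq, Set.mem_iUnion, hS, Finset.mem_singleton, exists_prop]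
    constructor
    · rintro ⟨w₀, hw₀, h1', h2'⟩
      exact ⟨w₀, hw₀, fun w hw => hw ▸ h1', h2'⟩
    · rintro ⟨w₀, hw₀, h1', h2'⟩
      exact ⟨w₀, hw₀, h1' w₀ rfl, h2'⟩
  rw [hset, measure_biUnion_finset]
  · have hval : ∀ w₀ ∈ W, edgeM n (S w₀)
        = ENNReal.ofReal q * ENNReal.ofReal (1 - q) ^ (W.card - 1) := by
      intro w₀ hw₀
      have hd : Disjoint ({w₀} : Finset (Fin n)) (W.erase w₀) := by
        simp [Finset.disjoint_left]
      have := edgeM_cylinder v h0 h1 {w₀} (W.erase w₀) hd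
      rw [hS]
      simpa [Finset.card_erase_of_mem hw₀] using this
    rw [Finset.sum_congr rfl hval, Finset.sum_const, nsmul_eq_mul]
  · intro a ha b hb hab
    simp only [Function.onFun]
    rw [Set.disjoint_left]
    rintro f ⟨hf1, hf2⟩ ⟨hg1, hg2⟩
    have hbW : b ∈ W.erase a := Finset.mem_erase.mpr ⟨Ne.symm hab, Finset.mem_coe.mp hb⟩
    exact absurd (hg1 b (Finset.mem_singleton_self b)) (not_le.mpr (hf2 b hbW))
  · intro w₀ _
    exact measurableSet_cyl v q {w₀} (W.erase w₀)

end SuperpositionKConn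

namespace SuperpositionKConn

open Finset
open scoped ENNReal

variable {n : ℕ}

lemma permMeasure_apply (S : Set (Equiv.Perm (Fin n))) :
    permMeasure n S = (S.ncard : ℝ≥0∞)
      * ((Fintype.card (Equiv.Perm (Fin n)) : ℝ≥0∞))⁻¹ := by
  classical
  rw [permMeasure, PMF.toMeasure_apply_fintype]
  simp only [Set.indicator_apply, PMF.uniformOfFintype_apply]
  rw [Finset.sum_ite, Finset.sum_const, Finset.sum_const_zero, add_zero, nsmul_eq_mul]
  congr 2
  rw [Set.ncard_eq_toFinset_card' S, ← Set.filter_mem_univ_eq_toFinset]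

/-- The number of permutations with `σ j = v` does not depend on `j`. -/
lemma card_fiber_const (v j j' : Fin n) :
    (Finset.univ.filter fun σ : Equiv.Perm (Fin n) => σ j = v).card
      = (Finset.univ.filter fun σ : Equiv.Perm (Fin n) => σ j' = v).card := by
  classical
  apply Finset.card_nbij' (fun σ => σ * Equiv.swap j j') (fun σ => σ * Equiv.swap j j')
  · intro σ hσ
    simp only [Finset.mem_coe, Finset.mem_filter, Finset.mem_univ, true_and] at hσ ⊢
    simp [Equiv.Perm.mul_apply, Equiv.swap_apply_right, hσ]
  · intro σ hσ
    simp only [Finset.mem_coe, Finset.mem_filter, Finset.mem_univ, true_and] at hσ ⊢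
    simp [Equiv.Perm.mul_apply, Equiv.swap_apply_left, hσ]
  · intro σ _
    simp [mul_assoc]
  · intro σ _
    simp [mul_assoc]

lemma sum_card_fiber (v : Fin n) :
    ∑ j : Fin n, (Finset.univ.filter fun σ : Equiv.Perm (Fin n) => σ j = v).card
      = Fintype.card (Equiv.Perm (Fin n)) := by
  classical
  rw [← Finset.card_univ]
  rw [Finset.card_eq_sum_card_fiberwise
    (f := fun σ : Equiv.Perm (Fin n) => σ.symm v) (t := Finset.univ) (fun x _ => mem_univ _)]
  refine Finset.sum_congr rfl fun j _ => ?_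
  congr 1
  ext σ
  simp only [Finset.mem_filter, Finset.mem_univ, true_and]
  exact ⟨fun h => by rw [← h]; simp, fun h => by rw [← h]; simp⟩

lemma card_fiber_mul (v j : Fin n) :
    n * (Finset.univ.filter fun σ : Equiv.Perm (Fin n) => σ j = v).card
      = Fintype.card (Equiv.Perm (Fin n)) := by
  rw [← sum_card_fiber v]
  rw [Finset.sum_congr rfl fun j' _ => card_fiber_const v j' j]
  rw [Finset.sum_const, smul_eq_mul, Finset.card_univ, Fintype.card_fin]

/-- `P(σ⁻¹ v ∈ D) = |D| / n`. -/
lemma permMeasure_symm_mem (v : Fin n) (D : Finset (Fin n)) :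
    permMeasure n {σ : Equiv.Perm (Fin n) | σ.symm v ∈ D} = (D.card : ℝ≥0∞) / n := by
  classical
  rcases Nat.eq_zero_or_pos n with rfl | hn
  · exact absurd v.2 (by omega)
  rw [permMeasure_apply]
  rw [show ({σ : Equiv.Perm (Fin n) | σ.symm v ∈ D} : Set (Equiv.Perm (Fin n))).ncard
      = (Finset.univ.filter (· ∈ {σ : Equiv.Perm (Fin n) | σ.symm v ∈ D})).card by
    rw [Set.ncard_eq_toFinset_card' _, ← Set.filter_mem_univ_eq_toFinset]]
  set c := (Finset.univ.filter fun σ : Equiv.Perm (Fin n) => σ ⟨0, hn⟩ = v).card with hc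
  have hcard : (Finset.univ.filter (· ∈ {σ : Equiv.Perm (Fin n) | σ.symm v ∈ D})).card
      = D.card * c := by
    rw [Finset.card_eq_sum_card_fiberwise
      (f := fun σ : Equiv.Perm (Fin n) => σ.symm v) (t := D)
      (fun σ hσ => by simpa using hσ)]
    have : ∀ j ∈ D, ((Finset.univ.filter (· ∈ {σ : Equiv.Perm (Fin n) | σ.symm v ∈ D})).filter
        fun σ => σ.symm v = j).card = c := by
      intro j hj
      rw [Finset.filter_filter]
      have : ∀ σ : Equiv.Perm (Fin n),
          (σ ∈ {σ : Equiv.Perm (Fin n) | σ.symm v ∈ D} ∧ σ.symm v = j) ↔ σ j = v := by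
        intro σ
        constructor
        · rintro ⟨_, h⟩; rw [← h]; simp
        · intro h
          have : σ.symm v = j := by rw [← h]; simp
          exact ⟨by simp [Set.mem_setOf_eq, this, hj], this⟩
      rw [Finset.filter_congr fun σ _ => this σ]
      rw [hc]
      exact card_fiber_const v j ⟨0, hn⟩
    rw [Finset.sum_congr rfl this, Finset.sum_const, smul_eq_mul]
  rw [hcard]
  have hNc : ((Fintype.card (Equiv.Perm (Fin n)) : ℕ) : ℝ≥0∞) = (n : ℝ≥0∞) * (c : ℝ≥0∞) := by
    rw [← card_fiber_mul v ⟨0, hn⟩, ← hc]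
    push_cast
    ring
  have hc0 : (c : ℝ≥0∞) ≠ 0 := by
    simp only [ne_eq, Nat.cast_eq_zero]
    intro h
    have h2 := card_fiber_mul v (⟨0, hn⟩ : Fin n)
    rw [← hc, h, mul_zero] at h2
    have hpos : 0 < Fintype.card (Equiv.Perm (Fin n)) := Fintype.card_pos
    omega
  rw [hNc]
  push_cast
  rw [← div_eq_mul_inv, ENNReal.mul_div_mul_right _ _ hc0 (ENNReal.natCast_ne_top c)]

end SuperpositionKConn

namespace SuperpositionKConn

open Finset
open scoped ENNReal

variable {n : ℕ}

lemma nat_mul_pred (m : ℕ) : m * m - m = m * (m - 1) := by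
  cases m with
  | zero => rfl
  | succ k => simp [Nat.succ_sub_one, Nat.succ_mul, Nat.mul_succ]

lemma exists_perm_two {a b c d : Fin n} (hab : a ≠ b) (hcd : c ≠ d) :
    ∃ ρ : Equiv.Perm (Fin n), ρ c = a ∧ ρ d = b := by
  refine ⟨Equiv.swap (Equiv.swap c a d) b * Equiv.swap c a, ?_, ?_⟩
  · have h1 : Equiv.swap c a c = a := Equiv.swap_apply_left c a
    simp only [Equiv.Perm.mul_apply, h1]
    apply Equiv.swap_apply_of_ne_of_ne
    · exact fun h => hcd ((Equiv.swap c a).injective (h1.trans h))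
    · exact hab
  · simp only [Equiv.Perm.mul_apply]
    exact Equiv.swap_apply_left _ b

lemma card_fiber2_const (u v : Fin n) {j k j' k' : Fin n} (hjk : j ≠ k) (hjk' : j' ≠ k') :
    (Finset.univ.filter fun σ : Equiv.Perm (Fin n) => σ j = v ∧ σ k = u).card
      = (Finset.univ.filter fun σ : Equiv.Perm (Fin n) => σ j' = v ∧ σ k' = u).card := by
  classical
  obtain ⟨ρ, hρ1, hρ2⟩ := exists_perm_two hjk hjk'
  apply Finset.card_nbij' (fun σ => σ * ρ) (fun σ => σ * ρ⁻¹)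
  · intro σ hσ
    simp only [Finset.mem_coe, Finset.mem_filter, Finset.mem_univ, true_and] at hσ ⊢
    simp [Equiv.Perm.mul_apply, hρ1, hρ2, hσ.1, hσ.2]
  · intro σ hσ
    simp only [Finset.mem_coe, Finset.mem_filter, Finset.mem_univ, true_and] at hσ ⊢
    have h1 : ρ⁻¹ j = j' := by
      rw [← hρ1]; simp
    have h2 : ρ⁻¹ k = k' := by
      rw [← hρ2]; simp
    simp [Equiv.Perm.mul_apply, h1, h2, hσ.1, hσ.2]
  · intro σ _; simp [mul_assoc]
  · intro σ _; simp [mul_assoc]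

lemma sum_card_fiber2 (u v : Fin n) (huv : v ≠ u) :
    ∑ p ∈ (Finset.univ : Finset (Fin n)).offDiag,
      (Finset.univ.filter fun σ : Equiv.Perm (Fin n) => σ p.1 = v ∧ σ p.2 = u).card
      = Fintype.card (Equiv.Perm (Fin n)) := by
  classical
  rw [← Finset.card_univ]
  rw [Finset.card_eq_sum_card_fiberwise
    (f := fun σ : Equiv.Perm (Fin n) => ((σ.symm v, σ.symm u) : Fin n × Fin n))
    (t := (Finset.univ : Finset (Fin n)).offDiag)
    (fun σ _ => Finset.mem_offDiag.mpr ⟨mem_univ _, mem_univ _,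
      fun h => huv (by simpa using congrArg σ h)⟩)]
  refine Finset.sum_congr rfl fun p _ => ?_
  congr 1
  ext σ
  simp only [Finset.mem_filter, Finset.mem_univ, true_and, Prod.ext_iff]
  constructor
  · rintro ⟨h1, h2⟩
    exact ⟨by rw [← h1]; simp, by rw [← h2]; simp⟩
  · rintro ⟨h1, h2⟩
    exact ⟨by rw [← h1]; simp, by rw [← h2]; simp⟩

lemma card_fiber2_mul (u v : Fin n) (huv : v ≠ u) {j k : Fin n} (hjk : j ≠ k) :
    (n * n - n) * (Finset.univ.filter fun σ : Equiv.Perm (Fin n) => σ j = v ∧ σ k = u).card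
      = Fintype.card (Equiv.Perm (Fin n)) := by
  classical
  rw [← sum_card_fiber2 u v huv]
  rw [Finset.sum_congr rfl fun p hp =>
    card_fiber2_const u v (Finset.mem_offDiag.mp hp).2.2 hjk]
  rw [Finset.sum_const, smul_eq_mul, Finset.offDiag_card, Finset.card_univ, Fintype.card_fin]

/-- `P(σ⁻¹ v ∈ D ∧ σ⁻¹ u ∈ D) = |D|(|D|-1) / (n(n-1))`. -/
lemma permMeasure_symm_pair (u v : Fin n) (huv : v ≠ u) (hn : 2 ≤ n) (D : Finset (Fin n)) :
    permMeasure n {σ : Equiv.Perm (Fin n) | σ.symm v ∈ D ∧ σ.symm u ∈ D}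
      = ((D.card * (D.card - 1) : ℕ) : ℝ≥0∞) / (((n * (n - 1) : ℕ) : ℝ≥0∞)) := by
  classical
  have hjk : (⟨0, by omega⟩ : Fin n) ≠ ⟨1, by omega⟩ := by
    simp [Fin.ext_iff]
  rw [permMeasure_apply]
  rw [show ({σ : Equiv.Perm (Fin n) | σ.symm v ∈ D ∧ σ.symm u ∈ D}
        : Set (Equiv.Perm (Fin n))).ncard
      = (Finset.univ.filter
        (· ∈ {σ : Equiv.Perm (Fin n) | σ.symm v ∈ D ∧ σ.symm u ∈ D})).card by
    rw [Set.ncard_eq_toFinset_card' _, ← Set.filter_mem_univ_eq_toFinset]]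
  set c := (Finset.univ.filter fun σ : Equiv.Perm (Fin n) =>
    σ (⟨0, by omega⟩ : Fin n) = v ∧ σ (⟨1, by omega⟩ : Fin n) = u).card with hc
  have hcard : (Finset.univ.filter
      (· ∈ {σ : Equiv.Perm (Fin n) | σ.symm v ∈ D ∧ σ.symm u ∈ D})).card
      = D.card * (D.card - 1) * c := by
    rw [Finset.card_eq_sum_card_fiberwise
      (f := fun σ : Equiv.Perm (Fin n) => ((σ.symm v, σ.symm u) : Fin n × Fin n))
      (t := D.offDiag)
      (fun σ hσ => by
        simp only [Finset.mem_coe, Finset.mem_filter, Finset.mem_univ, true_and, Set.mem_setOf_eq] at hσ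
        exact Finset.mem_offDiag.mpr ⟨hσ.1, hσ.2,
          fun h => huv (by simpa using congrArg σ h)⟩)]
    have hfib : ∀ p ∈ D.offDiag, ((Finset.univ.filter
        (· ∈ {σ : Equiv.Perm (Fin n) | σ.symm v ∈ D ∧ σ.symm u ∈ D})).filter
        fun σ => (σ.symm v, σ.symm u) = p).card = c := by
      intro p hp
      obtain ⟨hp1, hp2, hp3⟩ := Finset.mem_offDiag.mp hp
      rw [Finset.filter_filter]
      have heq : ∀ σ : Equiv.Perm (Fin n),
          ((σ ∈ {σ : Equiv.Perm (Fin n) | σ.symm v ∈ D ∧ σ.symm u ∈ D}) ∧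
            (σ.symm v, σ.symm u) = p) ↔ (σ p.1 = v ∧ σ p.2 = u) := by
        intro σ
        constructor
        · rintro ⟨_, h⟩
          rw [Prod.ext_iff] at h
          exact ⟨by rw [← h.1]; simp, by rw [← h.2]; simp⟩
        · rintro ⟨h1, h2⟩
          have e1 : σ.symm v = p.1 := by rw [← h1]; simp
          have e2 : σ.symm u = p.2 := by rw [← h2]; simp
          exact ⟨⟨by rw [e1]; exact hp1, by rw [e2]; exact hp2⟩, by rw [e1, e2]⟩
      rw [Finset.filter_congr fun σ _ => heq σ]
      rw [hc]
      exact card_fiber2_const u v hp3 hjk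
    rw [Finset.sum_congr rfl hfib, Finset.sum_const, smul_eq_mul, Finset.offDiag_card,
      nat_mul_pred]
  rw [hcard]
  have hNc : ((Fintype.card (Equiv.Perm (Fin n)) : ℕ) : ℝ≥0∞)
      = ((n * (n - 1) : ℕ) : ℝ≥0∞) * (c : ℝ≥0∞) := by
    rw [← card_fiber2_mul u v huv hjk, ← hc, nat_mul_pred]
    push_cast [Nat.cast_sub (by omega : 1 ≤ n)]
    ring
  have hc0 : (c : ℝ≥0∞) ≠ 0 := by
    simp only [ne_eq, Nat.cast_eq_zero]
    intro h
    have h2 := card_fiber2_mul u v huv hjk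
    rw [← hc, h, mul_zero] at h2
    have hpos : 0 < Fintype.card (Equiv.Perm (Fin n)) := Fintype.card_pos
    omega
  rw [hNc]
  push_cast
  rw [← div_eq_mul_inv, ENNReal.mul_div_mul_right _ _ hc0 (ENNReal.natCast_ne_top c)]

end SuperpositionKConn

namespace SuperpositionKConn

open Finset
open scoped ENNReal

variable {n : ℕ}

/-- The community vertex set, as a finset, given community size `s` and permutation `σ`. -/
def commFinset (n s : ℕ) (σ : Equiv.Perm (Fin n)) : Finset (Fin n) :=
  Finset.univ.filter fun w => ((σ.symm w : Fin n) : ℕ) < s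

lemma mem_commFinset {s : ℕ} {σ : Equiv.Perm (Fin n)} {w : Fin n} :
    w ∈ commFinset n s σ ↔ ((σ.symm w : Fin n) : ℕ) < s := by
  simp [commFinset]

lemma inComm_iff {x : ℕ} {q : ℝ} {σ : Equiv.Perm (Fin n)} {f : Sym2 (Fin n) → ℝ} {w : Fin n} :
    inComm (((x, q), σ, f) : CommSpace n) w ↔ w ∈ commFinset n (min x n) σ := by
  simp [inComm, mem_commFinset]

lemma card_fin_lt {s : ℕ} (hs : s ≤ n) :
    ((Finset.univ : Finset (Fin n)).filter fun j : Fin n => (j : ℕ) < s).card = s := by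
  classical
  rcases Nat.eq_zero_or_pos n with rfl | hn
  · interval_cases s
    simp
  conv_rhs => rw [← Finset.card_range s]
  refine Finset.card_nbij' (i := fun j : Fin n => (j : ℕ))
    (j := fun a : ℕ => (⟨a % n, Nat.mod_lt a hn⟩ : Fin n)) ?_ ?_ ?_ ?_
  · intro j hj
    simp only [Finset.mem_coe, Finset.mem_filter, Finset.mem_univ, true_and] at hj
    exact Finset.mem_range.mpr hj
  · intro a ha
    simp only [Finset.mem_coe, Finset.mem_range] at ha
    simp only [Finset.mem_coe, Finset.mem_filter, Finset.mem_univ, true_and]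
    simpa [Nat.mod_eq_of_lt (lt_of_lt_of_le ha hs)] using ha
  · intro j hj
    simp only [Finset.mem_coe, Finset.mem_filter, Finset.mem_univ, true_and] at hj
    exact Fin.ext (by simp [Nat.mod_eq_of_lt (lt_of_lt_of_le hj hs)])
  · intro a ha
    simp only [Finset.mem_coe, Finset.mem_range] at ha
    simp [Nat.mod_eq_of_lt (lt_of_lt_of_le ha hs)]

lemma card_commFinset {s : ℕ} (hs : s ≤ n) (σ : Equiv.Perm (Fin n)) :
    (commFinset n s σ).card = s := by
  classical
  have : commFinset n s σ
      = ((Finset.univ : Finset (Fin n)).filter fun j : Fin n => (j : ℕ) < s).image σ := by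
    ext w
    simp only [commFinset, Finset.mem_filter, Finset.mem_univ, true_and, Finset.mem_image]
    constructor
    · intro h
      exact ⟨σ.symm w, h, by simp⟩
    · rintro ⟨j, hj, rfl⟩
      simpa using hj
  rw [this, Finset.card_image_of_injective _ σ.injective, card_fin_lt hs]

section Measurability

lemma measurableSet_perm (S : Set (Equiv.Perm (Fin n))) : MeasurableSet S := trivial

lemma measurableSet_inComm (w : Fin n) :
    MeasurableSet {ω : CommSpace n | inComm ω w} := by
  have : {ω : CommSpace n | inComm ω w} = ⋃ x : ℕ,
      ((Prod.fst ⁻¹' {x} : Set (ℕ × ℝ)) ×ˢ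
        (({σ : Equiv.Perm (Fin n) | ((σ.symm w : Fin n) : ℕ) < min x n}) ×ˢ
          (Set.univ : Set (Sym2 (Fin n) → ℝ)))) := by
    ext ⟨⟨x, q⟩, σ, f⟩
    simp [inComm]
  rw [this]
  exact MeasurableSet.iUnion fun x =>
    ((measurable_fst (measurableSet_singleton x)).prod
      ((measurableSet_perm _).prod MeasurableSet.univ))

lemma measurableSet_commAdj (a b : Fin n) :
    MeasurableSet {ω : CommSpace n | commAdj ω a b} := by
  by_cases hab : a = b
  · have : {ω : CommSpace n | commAdj ω a b} = ∅ := by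
      ext ω
      simp [commAdj, hab]
    rw [this]; exact MeasurableSet.empty
  · have : {ω : CommSpace n | commAdj ω a b}
        = {ω : CommSpace n | inComm ω a} ∩ {ω : CommSpace n | inComm ω b} ∩
          {ω : CommSpace n | ω.2.2 s(a, b) ≤ ω.1.2} := by
      ext ω
      simp only [Set.mem_setOf_eq, Set.mem_inter_iff, commAdj]
      tauto
    rw [this]
    refine ((measurableSet_inComm a).inter (measurableSet_inComm b)).inter ?_
    have h1 : Measurable fun ω : CommSpace n => ω.2.2 s(a, b) :=
      (measurable_pi_apply s(a, b)).comp (measurable_snd.comp measurable_snd)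
    have h2 : Measurable fun ω : CommSpace n => ω.1.2 :=
      measurable_snd.comp measurable_fst
    exact measurableSet_le h1 h2

lemma measurableSet_Nset_eq (v : Fin n) (T : Finset (Fin n)) :
    MeasurableSet {ω : CommSpace n | {w | commAdj ω v w} = (T : Set (Fin n))} := by
  have : {ω : CommSpace n | {w | commAdj ω v w} = (T : Set (Fin n))}
      = ⋂ w : Fin n, {ω : CommSpace n | commAdj ω v w ↔ w ∈ T} := by
    ext ω
    simp only [Set.mem_setOf_eq, Set.mem_iInter, Set.ext_iff, Finset.mem_coe]
  rw [this]
  refine MeasurableSet.iInter fun w => ?_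
  by_cases hw : w ∈ T
  · have : {ω : CommSpace n | commAdj ω v w ↔ w ∈ T} = {ω : CommSpace n | commAdj ω v w} := by
      ext ω; simp [hw]
    rw [this]; exact measurableSet_commAdj v w
  · have : {ω : CommSpace n | commAdj ω v w ↔ w ∈ T}
        = {ω : CommSpace n | commAdj ω v w}ᶜ := by
      ext ω; simp [hw]
    rw [this]; exact (measurableSet_commAdj v w).compl

lemma measurableSet_commDeg_eq (v : Fin n) (t : ℕ) :
    MeasurableSet {ω : CommSpace n | commDeg ω v = t} := by
  classical
  have : {ω : CommSpace n | commDeg ω v = t}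
      = ⋃ (T : Finset (Fin n)) (_ : T.card = t),
          {ω : CommSpace n | {w | commAdj ω v w} = (T : Set (Fin n))} := by
    ext ω
    simp only [Set.mem_setOf_eq, Set.mem_iUnion]
    constructor
    · intro h
      have hfin := Set.toFinite {w | commAdj ω v w}
      refine ⟨hfin.toFinset, ?_, hfin.coe_toFinset.symm⟩
      rw [← h]
      exact (Set.ncard_eq_toFinset_card _ hfin).symm
    · rintro ⟨T, hT, h⟩
      unfold commDeg
      rw [h, Set.ncard_coe_finset, hT]
  rw [this]
  exact MeasurableSet.iUnion fun T => MeasurableSet.iUnion fun _ =>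
    measurableSet_Nset_eq v T

lemma measurableSet_exists_adj (v : Fin n) :
    MeasurableSet {ω : CommSpace n | ∃ w, commAdj ω v w} := by
  have : {ω : CommSpace n | ∃ w, commAdj ω v w}
      = ⋃ w : Fin n, {ω : CommSpace n | commAdj ω v w} := by
    ext ω; simp
  rw [this]
  exact MeasurableSet.iUnion fun w => measurableSet_commAdj v w

end Measurability

end SuperpositionKConn

namespace SuperpositionKConn

open Finset
open scoped ENNReal

variable {n : ℕ}

/-- The permutation-and-edge-labels part of the community measure. -/
def nuM (n : ℕ) : Measure (Equiv.Perm (Fin n) × (Sym2 (Fin n) → ℝ)) :=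
  (permMeasure n).prod (edgeM n)

instance (n : ℕ) : IsProbabilityMeasure (nuM n) := by unfold nuM; infer_instance

lemma commMeasure_eq (μ : Measure (ℕ × ℝ)) : commMeasure μ n = μ.prod (nuM n) := rfl

lemma commAdj_iff {x : ℕ} {q : ℝ} {σ : Equiv.Perm (Fin n)} {f : Sym2 (Fin n) → ℝ}
    {v w : Fin n} (hv : v ∈ commFinset n (min x n) σ) :
    commAdj (((x, q), σ, f) : CommSpace n) v w
      ↔ w ∈ (commFinset n (min x n) σ).erase v ∧ f s(v, w) ≤ q := by
  simp only [commAdj, inComm_iff, Finset.mem_erase]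
  constructor
  · rintro ⟨hne, _, hwC, hf⟩
    exact ⟨⟨Ne.symm hne, hwC⟩, hf⟩
  · rintro ⟨⟨hne, hwC⟩, hf⟩
    exact ⟨Ne.symm hne, hv, hwC, hf⟩

lemma not_commAdj {x : ℕ} {q : ℝ} {σ : Equiv.Perm (Fin n)} {f : Sym2 (Fin n) → ℝ}
    {v w : Fin n} (hv : v ∉ commFinset n (min x n) σ) :
    ¬ commAdj (((x, q), σ, f) : CommSpace n) v w := by
  rintro ⟨_, hvC, _, _⟩
  exact hv (inComm_iff.mp hvC)

lemma edge_slice_exists_adj (v : Fin n) (x : ℕ) (q : ℝ) (σ : Equiv.Perm (Fin n)) :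
    {f : Sym2 (Fin n) → ℝ | ∃ w, commAdj (((x, q), σ, f) : CommSpace n) v w}
      = if v ∈ commFinset n (min x n) σ
        then {f : Sym2 (Fin n) → ℝ |
          ∃ w ∈ (commFinset n (min x n) σ).erase v, f s(v, w) ≤ q}
        else ∅ := by
  split_ifs with hv
  · ext f
    simp only [Set.mem_setOf_eq]
    constructor
    · rintro ⟨w, hw⟩
      obtain ⟨h1, h2⟩ := (commAdj_iff hv).mp hw
      exact ⟨w, h1, h2⟩
    · rintro ⟨w, h1, h2⟩
      exact ⟨w, (commAdj_iff hv).mpr ⟨h1, h2⟩⟩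
  · ext f
    simp only [Set.mem_setOf_eq, Set.mem_empty_iff_false, iff_false]
    rintro ⟨w, hw⟩
    exact not_commAdj hv hw

lemma edge_slice_deg_one (v : Fin n) (x : ℕ) (q : ℝ) (σ : Equiv.Perm (Fin n)) :
    {f : Sym2 (Fin n) → ℝ | commDeg (((x, q), σ, f) : CommSpace n) v = 1}
      = if v ∈ commFinset n (min x n) σ
        then {f : Sym2 (Fin n) → ℝ |
          ∃ w₀ ∈ (commFinset n (min x n) σ).erase v, f s(v, w₀) ≤ q ∧
            ∀ w ∈ ((commFinset n (min x n) σ).erase v).erase w₀, q < f s(v, w)}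
        else ∅ := by
  split_ifs with hv
  · ext f
    simp only [Set.mem_setOf_eq]
    unfold commDeg
    rw [Set.ncard_eq_one]
    constructor
    · rintro ⟨w₀, hset⟩
      have hw₀ : commAdj (((x, q), σ, f) : CommSpace n) v w₀ := by
        rw [Set.ext_iff] at hset
        exact (hset w₀).mpr rfl
      obtain ⟨hmem, hf⟩ := (commAdj_iff hv).mp hw₀
      refine ⟨w₀, hmem, hf, fun w hw => ?_⟩
      obtain ⟨hne, hwE⟩ := Finset.mem_erase.mp hw
      by_contra hq
      push_neg at hq
      have : commAdj (((x, q), σ, f) : CommSpace n) v w :=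
        (commAdj_iff hv).mpr ⟨hwE, hq⟩
      rw [Set.ext_iff] at hset
      exact hne ((hset w).mp this)
    · rintro ⟨w₀, hmem, hf, hrest⟩
      refine ⟨w₀, ?_⟩
      apply Set.eq_singleton_iff_unique_mem.mpr
      constructor
      · exact (commAdj_iff hv).mpr ⟨hmem, hf⟩
      · intro w hw
        obtain ⟨hwE, hfw⟩ := (commAdj_iff hv).mp hw
        by_contra hne
        exact absurd hfw (not_le.mpr (hrest w (Finset.mem_erase.mpr ⟨hne, hwE⟩)))
  · ext f
    simp only [Set.mem_setOf_eq, Set.mem_empty_iff_false, iff_false]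
    intro hdeg
    have : {w | commAdj (((x, q), σ, f) : CommSpace n) v w} = ∅ := by
      ext w
      simp only [Set.mem_setOf_eq, Set.mem_empty_iff_false, iff_false]
      exact not_commAdj hv
    unfold commDeg at hdeg
    rw [this, Set.ncard_empty] at hdeg
    omega

lemma mem_perm_set_iff {s : ℕ} {σ : Equiv.Perm (Fin n)} {v : Fin n} :
    v ∈ commFinset n s σ
      ↔ σ.symm v ∈ (Finset.univ.filter fun j : Fin n => (j : ℕ) < s) := by
  simp [mem_commFinset]

lemma nuM_slice_exists_adj (v : Fin n) (x : ℕ) {q : ℝ} (h0 : 0 ≤ q) (h1 : q ≤ 1) :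
    nuM n (Prod.mk (x, q) ⁻¹' {ω : CommSpace n | ∃ w, commAdj ω v w})
      = ((min x n : ℕ) : ℝ≥0∞) / n * (1 - ENNReal.ofReal (1 - q) ^ (min x n - 1)) := by
  have hsn : min x n ≤ n := min_le_right x n
  rw [nuM, Measure.prod_apply (measurable_prodMk_left (measurableSet_exists_adj v))]
  have hfib : (fun σ : Equiv.Perm (Fin n) => edgeM n (Prod.mk σ ⁻¹'
        (Prod.mk ((x, q) : ℕ × ℝ) ⁻¹' {ω : CommSpace n | ∃ w, commAdj ω v w})))
      = Set.indicator {σ' : Equiv.Perm (Fin n) |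
            σ'.symm v ∈ Finset.univ.filter fun j : Fin n => (j : ℕ) < min x n}
          (fun _ => 1 - ENNReal.ofReal (1 - q) ^ (min x n - 1)) := by
    funext σ
    have hpre : Prod.mk σ ⁻¹' (Prod.mk ((x, q) : ℕ × ℝ) ⁻¹'
          {ω : CommSpace n | ∃ w, commAdj ω v w})
        = {f : Sym2 (Fin n) → ℝ | ∃ w, commAdj (((x, q), σ, f) : CommSpace n) v w} := rfl
    rw [hpre, edge_slice_exists_adj v x q σ]
    by_cases hv : v ∈ commFinset n (min x n) σ
    · rw [if_pos hv, edgeM_exists_le v h0 h1 _,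
        Finset.card_erase_of_mem hv, card_commFinset hsn σ]
      symm
      apply Set.indicator_of_mem
      exact mem_perm_set_iff.mp hv
    · rw [if_neg hv, measure_empty]
      symm
      apply Set.indicator_of_notMem
      exact fun hc => hv (mem_perm_set_iff.mpr hc)
  rw [hfib, lintegral_indicator_const (measurableSet_perm _),
    permMeasure_symm_mem v _, card_fin_lt hsn, mul_comm]

lemma nuM_slice_inComm_exists_adj (u v : Fin n) (huv : v ≠ u) (hn : 2 ≤ n)
    (x : ℕ) {q : ℝ} (h0 : 0 ≤ q) (h1 : q ≤ 1) :
    nuM n (Prod.mk (x, q) ⁻¹'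
        {ω : CommSpace n | inComm ω u ∧ ∃ w, commAdj ω v w})
      = ((min x n * (min x n - 1) : ℕ) : ℝ≥0∞) / ((n * (n - 1) : ℕ) : ℝ≥0∞)
        * (1 - ENNReal.ofReal (1 - q) ^ (min x n - 1)) := by
  have hsn : min x n ≤ n := min_le_right x n
  have hmeas : MeasurableSet {ω : CommSpace n | inComm ω u ∧ ∃ w, commAdj ω v w} := by
    have : {ω : CommSpace n | inComm ω u ∧ ∃ w, commAdj ω v w}
        = {ω : CommSpace n | inComm ω u} ∩ {ω : CommSpace n | ∃ w, commAdj ω v w} := rfl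
    rw [this]
    exact (measurableSet_inComm u).inter (measurableSet_exists_adj v)
  rw [nuM, Measure.prod_apply (measurable_prodMk_left hmeas)]
  have hfib : (fun σ : Equiv.Perm (Fin n) => edgeM n (Prod.mk σ ⁻¹'
        (Prod.mk ((x, q) : ℕ × ℝ) ⁻¹'
          {ω : CommSpace n | inComm ω u ∧ ∃ w, commAdj ω v w})))
      = Set.indicator {σ' : Equiv.Perm (Fin n) |
            σ'.symm v ∈ (Finset.univ.filter fun j : Fin n => (j : ℕ) < min x n) ∧
            σ'.symm u ∈ (Finset.univ.filter fun j : Fin n => (j : ℕ) < min x n)}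
          (fun _ => 1 - ENNReal.ofReal (1 - q) ^ (min x n - 1)) := by
    funext σ
    have hpre : Prod.mk σ ⁻¹' (Prod.mk ((x, q) : ℕ × ℝ) ⁻¹'
          {ω : CommSpace n | inComm ω u ∧ ∃ w, commAdj ω v w})
        = {f : Sym2 (Fin n) → ℝ | inComm (((x, q), σ, f) : CommSpace n) u ∧
            ∃ w, commAdj (((x, q), σ, f) : CommSpace n) v w} := rfl
    rw [hpre]
    by_cases hu : u ∈ commFinset n (min x n) σ
    · have hsimp : {f : Sym2 (Fin n) → ℝ | inComm (((x, q), σ, f) : CommSpace n) u ∧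
          ∃ w, commAdj (((x, q), σ, f) : CommSpace n) v w}
          = {f : Sym2 (Fin n) → ℝ | ∃ w, commAdj (((x, q), σ, f) : CommSpace n) v w} := by
        ext f
        simp only [Set.mem_setOf_eq, inComm_iff, hu, true_and]
      rw [hsimp, edge_slice_exists_adj v x q σ]
      by_cases hv : v ∈ commFinset n (min x n) σ
      · rw [if_pos hv, edgeM_exists_le v h0 h1 _,
          Finset.card_erase_of_mem hv, card_commFinset hsn σ]
        symm
        apply Set.indicator_of_mem
        exact ⟨mem_perm_set_iff.mp hv, mem_perm_set_iff.mp hu⟩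
      · rw [if_neg hv, measure_empty]
        symm
        apply Set.indicator_of_notMem
        
        rintro ⟨hc, -⟩
        exact hv (mem_perm_set_iff.mpr hc)
    · have hempty : {f : Sym2 (Fin n) → ℝ | inComm (((x, q), σ, f) : CommSpace n) u ∧
          ∃ w, commAdj (((x, q), σ, f) : CommSpace n) v w} = ∅ := by
        ext f
        simp only [Set.mem_setOf_eq, Set.mem_empty_iff_false, iff_false, inComm_iff]
        rintro ⟨hc, -⟩
        exact hu hc
      rw [hempty, measure_empty]
      symm
      apply Set.indicator_of_notMem
      
      rintro ⟨-, hc⟩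
      exact hu (mem_perm_set_iff.mpr hc)
  rw [hfib, lintegral_indicator_const (measurableSet_perm _),
    permMeasure_symm_pair u v huv hn _, card_fin_lt hsn, mul_comm]

lemma nuM_slice_deg_one (v : Fin n) (x : ℕ) {q : ℝ} (h0 : 0 ≤ q) (h1 : q ≤ 1) :
    nuM n (Prod.mk (x, q) ⁻¹' {ω : CommSpace n | commDeg ω v = 1})
      = ((min x n : ℕ) : ℝ≥0∞) / n * (((min x n - 1 : ℕ) : ℝ≥0∞)
          * (ENNReal.ofReal q * ENNReal.ofReal (1 - q) ^ (min x n - 2))) := by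
  have hsn : min x n ≤ n := min_le_right x n
  rw [nuM, Measure.prod_apply (measurable_prodMk_left (measurableSet_commDeg_eq v 1))]
  have hfib : (fun σ : Equiv.Perm (Fin n) => edgeM n (Prod.mk σ ⁻¹'
        (Prod.mk ((x, q) : ℕ × ℝ) ⁻¹' {ω : CommSpace n | commDeg ω v = 1})))
      = Set.indicator {σ' : Equiv.Perm (Fin n) |
            σ'.symm v ∈ Finset.univ.filter fun j : Fin n => (j : ℕ) < min x n}
          (fun _ => ((min x n - 1 : ℕ) : ℝ≥0∞)
            * (ENNReal.ofReal q * ENNReal.ofReal (1 - q) ^ (min x n - 2))) := by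
    funext σ
    have hpre : Prod.mk σ ⁻¹' (Prod.mk ((x, q) : ℕ × ℝ) ⁻¹'
          {ω : CommSpace n | commDeg ω v = 1})
        = {f : Sym2 (Fin n) → ℝ | commDeg (((x, q), σ, f) : CommSpace n) v = 1} := rfl
    rw [hpre, edge_slice_deg_one v x q σ]
    by_cases hv : v ∈ commFinset n (min x n) σ
    · rw [if_pos hv, edgeM_exactly_one v h0 h1 _,
        Finset.card_erase_of_mem hv, card_commFinset hsn σ, Nat.sub_sub]
      symm
      apply Set.indicator_of_mem
      exact mem_perm_set_iff.mp hv
    · rw [if_neg hv, measure_empty]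
      symm
      apply Set.indicator_of_notMem
      exact fun hc => hv (mem_perm_set_iff.mpr hc)
  rw [hfib, lintegral_indicator_const (measurableSet_perm _),
    permMeasure_symm_mem v _, card_fin_lt hsn, mul_comm]

end SuperpositionKConn

namespace SuperpositionKConn

open scoped ENNReal

variable {n : ℕ}

lemma measurable_natprod {g : ℕ → ℝ → ℝ} (hg : ∀ k, Measurable (g k)) :
    Measurable fun p : ℕ × ℝ => g p.1 p.2 := by
  have h : Measurable fun p : ℝ × ℕ => g p.2 p.1 :=
    measurable_from_prod_countable_left fun k => hg k
  exact h.comp measurable_swap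

lemma measurable_hfun (s : ℕ) : Measurable fun q : ℝ => hfun s q := by
  unfold hfun
  exact measurable_const.sub ((measurable_const.sub measurable_id).pow_const _)

lemma hfun_nonneg {s : ℕ} {q : ℝ} (h0 : 0 ≤ q) (h1 : q ≤ 1) : 0 ≤ hfun s q := by
  unfold hfun
  have := pow_le_one₀ (by linarith : (0:ℝ) ≤ 1 - q) (by linarith : 1 - q ≤ 1) (n := s - 1)
  linarith

lemma hfun_le_one {s : ℕ} {q : ℝ} (h1 : q ≤ 1) : hfun s q ≤ 1 := by
  unfold hfun
  have := pow_nonneg (by linarith : (0:ℝ) ≤ 1 - q) (s - 1)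
  linarith

lemma hfun_le {s : ℕ} {q : ℝ} (h1 : q ≤ 1) : hfun s q ≤ ((s - 1 : ℕ) : ℝ) * q := by
  unfold hfun
  have h := one_add_mul_le_pow (by linarith : (-2:ℝ) ≤ -q) (s - 1)
  have h2 : (1 : ℝ) + ((s - 1 : ℕ) : ℝ) * (-q) ≤ (1 - q) ^ (s - 1) := by
    rw [show (1 : ℝ) - q = 1 + -q by ring]
    exact h
  nlinarith

lemma fall2_cast (s : ℕ) : ((s * (s - 1) : ℕ) : ℝ) = fall2 s := by
  cases s with
  | zero => simp [fall2]
  | succ k => push_cast [Nat.succ_sub_one, fall2]; ring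

lemma fall2_cast' (s : ℕ) : (s : ℝ) * ((s - 1 : ℕ) : ℝ) = fall2 s := by
  cases s with
  | zero => simp [fall2]
  | succ k => push_cast [Nat.succ_sub_one, fall2]; ring

lemma fall2_nonneg (s : ℕ) : 0 ≤ fall2 s := by
  rw [← fall2_cast]; positivity

/-- Generic conversion: probability of an event whose slice measures are `ofReal (f p)`. -/
lemma toReal_eq_integral_of_slice (μ : Measure (ℕ × ℝ)) [IsProbabilityMeasure μ]
    {E : Set (CommSpace n)} (hE : MeasurableSet E) {f : ℕ × ℝ → ℝ} {C : ℝ}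
    (hf : AEStronglyMeasurable f μ) (h0 : 0 ≤ᵐ[μ] f) (hbd : ∀ᵐ p ∂μ, f p ≤ C)
    (hslice : ∀ᵐ p ∂μ, nuM n (Prod.mk p ⁻¹' E) = ENNReal.ofReal (f p)) :
    (commMeasure μ n E).toReal = ∫ p, f p ∂μ := by
  have hint : Integrable f μ := by
    apply Integrable.mono' (integrable_const C) hf
    filter_upwards [h0, hbd] with p h1 h2
    rw [Real.norm_eq_abs, abs_of_nonneg h1]; exact h2
  rw [commMeasure_eq, Measure.prod_apply hE, lintegral_congr_ae hslice,
    ← ofReal_integral_eq_lintegral_ofReal hint h0, ENNReal.toReal_ofReal]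
  exact integral_nonneg_of_ae h0

lemma ennreal_conv1 (hn : 0 < n) (s : ℕ) {q : ℝ} (h1 : q ≤ 1) :
    (s : ℝ≥0∞) / n * (1 - ENNReal.ofReal (1 - q) ^ (s - 1))
      = ENNReal.ofReal ((s : ℝ) / n * hfun s q) := by
  have h1q : (0:ℝ) ≤ 1 - q := by linarith
  unfold hfun
  rw [ENNReal.ofReal_mul (by positivity), ENNReal.ofReal_div_of_pos (by exact_mod_cast hn),
    ENNReal.ofReal_natCast, ENNReal.ofReal_natCast,
    ENNReal.ofReal_sub _ (pow_nonneg h1q _), ENNReal.ofReal_one, ENNReal.ofReal_pow h1q]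

lemma ennreal_conv2 (hn : 2 ≤ n) (s : ℕ) {q : ℝ} (h1 : q ≤ 1) :
    ((s * (s - 1) : ℕ) : ℝ≥0∞) / ((n * (n - 1) : ℕ) : ℝ≥0∞)
        * (1 - ENNReal.ofReal (1 - q) ^ (s - 1))
      = ENNReal.ofReal (((s * (s - 1) : ℕ) : ℝ) / ((n * (n - 1) : ℕ) : ℝ) * hfun s q) := by
  have h1q : (0:ℝ) ≤ 1 - q := by linarith
  have hpos : 0 < n * (n - 1) := by
    have : 1 ≤ n - 1 := by omega
    calc 0 < 1 * 1 := one_pos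
    _ ≤ n * (n - 1) := Nat.mul_le_mul (by omega) this
  unfold hfun
  rw [ENNReal.ofReal_mul (by positivity), ENNReal.ofReal_div_of_pos (by exact_mod_cast hpos),
    ENNReal.ofReal_natCast, ENNReal.ofReal_natCast,
    ENNReal.ofReal_sub _ (pow_nonneg h1q _), ENNReal.ofReal_one, ENNReal.ofReal_pow h1q]

lemma ennreal_conv3 (hn : 0 < n) (s : ℕ) {q : ℝ} (h0 : 0 ≤ q) (h1 : q ≤ 1) :
    (s : ℝ≥0∞) / n * (((s - 1 : ℕ) : ℝ≥0∞)
        * (ENNReal.ofReal q * ENNReal.ofReal (1 - q) ^ (s - 2)))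
      = ENNReal.ofReal ((s : ℝ) / n * (((s - 1 : ℕ) : ℝ) * (q * (1 - q) ^ (s - 2)))) := by
  have h1q : (0:ℝ) ≤ 1 - q := by linarith
  rw [ENNReal.ofReal_mul (by positivity), ENNReal.ofReal_mul (by positivity),
    ENNReal.ofReal_mul h0, ENNReal.ofReal_div_of_pos (by exact_mod_cast hn),
    ENNReal.ofReal_natCast, ENNReal.ofReal_natCast, ENNReal.ofReal_natCast,
    ENNReal.ofReal_pow h1q]

/-- `P(d(v) ≥ 1) = κ_n / n`. -/
lemma prob_exists_adj (μ : Measure (ℕ × ℝ)) [IsProbabilityMeasure μ]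
    (hQ : ∀ᵐ p ∂μ, p.2 ∈ Set.Icc (0 : ℝ) 1) (hn : 0 < n) (v : Fin n) :
    (commMeasure μ n {ω : CommSpace n | ∃ w, commAdj ω v w}).toReal = kappaN μ n / n := by
  have hmeas : Measurable fun p : ℕ × ℝ =>
      ((min p.1 n : ℕ) : ℝ) / n * hfun (min p.1 n) p.2 :=
    measurable_natprod (g := fun k q => ((min k n : ℕ) : ℝ) / n * hfun (min k n) q)
      fun k => ((measurable_hfun (min k n)).const_mul _)
  have heq := toReal_eq_integral_of_slice (n := n) μ (measurableSet_exists_adj v)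
    (f := fun p => ((min p.1 n : ℕ) : ℝ) / n * hfun (min p.1 n) p.2) (C := 1)
    hmeas.aestronglyMeasurable
    (by filter_upwards [hQ] with p hp
        exact mul_nonneg (by positivity) (hfun_nonneg hp.1 hp.2))
    (by filter_upwards [hQ] with p hp
        have h1 : ((min p.1 n : ℕ) : ℝ) / n ≤ 1 := by
          rw [div_le_one (by exact_mod_cast hn)]
          exact_mod_cast min_le_right p.1 n
        exact mul_le_one₀ h1 (hfun_nonneg hp.1 hp.2) (hfun_le_one hp.2))
    (by filter_upwards [hQ] with p hp
        rw [show p = (p.1, p.2) from rfl, nuM_slice_exists_adj v p.1 hp.1 hp.2,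
          ennreal_conv1 hn (min p.1 n) hp.2])
  rw [heq]
  rw [show (fun p : ℕ × ℝ => ((min p.1 n : ℕ) : ℝ) / n * hfun (min p.1 n) p.2)
      = fun p : ℕ × ℝ => ((min p.1 n : ℝ) * hfun (min p.1 n) p.2) / n by
    funext p
    rw [Nat.cast_min]
    ring]
  rw [integral_div, kappaN]

/-- `P(u ∈ community ∧ d(v) ≥ 1) = E[(X̃)₂ h] / (n(n-1))`. -/
lemma prob_inComm_exists_adj (μ : Measure (ℕ × ℝ)) [IsProbabilityMeasure μ]
    (hQ : ∀ᵐ p ∂μ, p.2 ∈ Set.Icc (0 : ℝ) 1) (hn : 2 ≤ n) (u v : Fin n) (huv : v ≠ u) :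
    (commMeasure μ n {ω : CommSpace n | inComm ω u ∧ ∃ w, commAdj ω v w}).toReal
      = (∫ p, fall2 (min p.1 n) * (1 - (1 - p.2) ^ (min p.1 n - 1)) ∂μ)
        / ((n : ℝ) * ((n : ℝ) - 1)) := by
  have hmeasE : MeasurableSet {ω : CommSpace n | inComm ω u ∧ ∃ w, commAdj ω v w} := by
    have : {ω : CommSpace n | inComm ω u ∧ ∃ w, commAdj ω v w}
        = {ω : CommSpace n | inComm ω u} ∩ {ω : CommSpace n | ∃ w, commAdj ω v w} := rfl
    rw [this]
    exact (measurableSet_inComm u).inter (measurableSet_exists_adj v)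
  have hmeas : Measurable fun p : ℕ × ℝ =>
      ((min p.1 n * (min p.1 n - 1) : ℕ) : ℝ) / ((n * (n - 1) : ℕ) : ℝ)
        * hfun (min p.1 n) p.2 :=
    measurable_natprod (g := fun k q => ((min k n * (min k n - 1) : ℕ) : ℝ)
        / ((n * (n - 1) : ℕ) : ℝ) * hfun (min k n) q)
      fun k => ((measurable_hfun (min k n)).const_mul _)
  have heq := toReal_eq_integral_of_slice (n := n) μ hmeasE
    (f := fun p => ((min p.1 n * (min p.1 n - 1) : ℕ) : ℝ) / ((n * (n - 1) : ℕ) : ℝ)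
      * hfun (min p.1 n) p.2) (C := 1)
    hmeas.aestronglyMeasurable
    (by filter_upwards [hQ] with p hp
        exact mul_nonneg (by positivity) (hfun_nonneg hp.1 hp.2))
    (by filter_upwards [hQ] with p hp
        have hle : (min p.1 n * (min p.1 n - 1) : ℕ) ≤ (n * (n - 1) : ℕ) :=
          Nat.mul_le_mul (min_le_right _ _) (by omega)
        have hpos : (0:ℝ) < ((n * (n - 1) : ℕ) : ℝ) := by
          have : 0 < n * (n - 1) := by
            have h1 : 1 ≤ n - 1 := by omega
            calc 0 < 1 * 1 := one_pos
            _ ≤ n * (n - 1) := Nat.mul_le_mul (by omega) h1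
          exact_mod_cast this
        have h1 : ((min p.1 n * (min p.1 n - 1) : ℕ) : ℝ) / ((n * (n - 1) : ℕ) : ℝ) ≤ 1 := by
          rw [div_le_one hpos]
          exact_mod_cast hle
        exact mul_le_one₀ h1 (hfun_nonneg hp.1 hp.2) (hfun_le_one hp.2))
    (by filter_upwards [hQ] with p hp
        rw [show p = (p.1, p.2) from rfl,
          nuM_slice_inComm_exists_adj u v huv hn p.1 hp.1 hp.2,
          ennreal_conv2 hn (min p.1 n) hp.2])
  rw [heq]
  have hcast : ((n * (n - 1) : ℕ) : ℝ) = (n : ℝ) * ((n : ℝ) - 1) := by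
    push_cast [Nat.cast_sub (by omega : 1 ≤ n)]
    ring
  rw [show (fun p : ℕ × ℝ => ((min p.1 n * (min p.1 n - 1) : ℕ) : ℝ)
        / ((n * (n - 1) : ℕ) : ℝ) * hfun (min p.1 n) p.2)
      = fun p : ℕ × ℝ => (fall2 (min p.1 n) * (1 - (1 - p.2) ^ (min p.1 n - 1)))
        / ((n : ℝ) * ((n : ℝ) - 1)) by
    funext p
    rw [← fall2_cast, hcast]
    unfold hfun
    ring]
  rw [integral_div]

/-- `P(d(v) = 1) = τ_n / n`. -/
lemma prob_deg_one (μ : Measure (ℕ × ℝ)) [IsProbabilityMeasure μ]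
    (hQ : ∀ᵐ p ∂μ, p.2 ∈ Set.Icc (0 : ℝ) 1) (hn : 0 < n) (v : Fin n) :
    (commMeasure μ n {ω : CommSpace n | commDeg ω v = 1}).toReal = tauN μ n / n := by
  have hmeas : Measurable fun p : ℕ × ℝ => ((min p.1 n : ℕ) : ℝ) / n
      * (((min p.1 n - 1 : ℕ) : ℝ) * (p.2 * (1 - p.2) ^ (min p.1 n - 2))) :=
    measurable_natprod (g := fun k q => ((min k n : ℕ) : ℝ) / n
        * (((min k n - 1 : ℕ) : ℝ) * (q * (1 - q) ^ (min k n - 2))))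
      fun k => by
        apply Measurable.const_mul
          (f := fun q : ℝ => ((min k n - 1 : ℕ) : ℝ) * (q * (1 - q) ^ (min k n - 2)))
        apply Measurable.const_mul (f := fun q : ℝ => q * (1 - q) ^ (min k n - 2))
        exact measurable_id.mul ((measurable_const.sub measurable_id).pow_const _)
  have heq := toReal_eq_integral_of_slice (n := n) μ (measurableSet_commDeg_eq v 1)
    (f := fun p => ((min p.1 n : ℕ) : ℝ) / n
      * (((min p.1 n - 1 : ℕ) : ℝ) * (p.2 * (1 - p.2) ^ (min p.1 n - 2)))) (C := n)
    hmeas.aestronglyMeasurable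
    (by filter_upwards [hQ] with p hp
        have h1q : (0:ℝ) ≤ 1 - p.2 := by linarith [hp.2]
        have := hp.1
        positivity)
    (by filter_upwards [hQ] with p hp
        have h1q : (0:ℝ) ≤ 1 - p.2 := by linarith [hp.2]
        have hd : ((min p.1 n : ℕ) : ℝ) / n ≤ 1 := by
          rw [div_le_one (by exact_mod_cast hn)]
          exact_mod_cast min_le_right p.1 n
        have hs1 : ((min p.1 n - 1 : ℕ) : ℝ) ≤ (n : ℝ) := by
          exact_mod_cast (by omega : min p.1 n - 1 ≤ n)
        have hq0 : 0 ≤ p.2 * (1 - p.2) ^ (min p.1 n - 2) :=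
          mul_nonneg hp.1 (pow_nonneg h1q _)
        have hq1 : p.2 * (1 - p.2) ^ (min p.1 n - 2) ≤ 1 :=
          mul_le_one₀ hp.2 (pow_nonneg h1q _)
            (pow_le_one₀ h1q (by linarith [hp.1]))
        calc ((min p.1 n : ℕ) : ℝ) / n
            * (((min p.1 n - 1 : ℕ) : ℝ) * (p.2 * (1 - p.2) ^ (min p.1 n - 2)))
            ≤ 1 * ((n : ℝ) * 1) := by
              apply mul_le_mul hd ?_ ?_ one_pos.le
              · exact mul_le_mul hs1 hq1 hq0 (by positivity)
              · exact mul_nonneg (Nat.cast_nonneg _) hq0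
        _ = (n : ℝ) := by ring)
    (by filter_upwards [hQ] with p hp
        rw [show p = (p.1, p.2) from rfl, nuM_slice_deg_one v p.1 hp.1 hp.2,
          ennreal_conv3 hn (min p.1 n) hp.1 hp.2])
  rw [heq]
  rw [show (fun p : ℕ × ℝ => ((min p.1 n : ℕ) : ℝ) / n
        * (((min p.1 n - 1 : ℕ) : ℝ) * (p.2 * (1 - p.2) ^ (min p.1 n - 2))))
      = fun p : ℕ × ℝ => (fall2 (min p.1 n) * p.2 * (1 - p.2) ^ (min p.1 n - 2)) / n by
    funext p
    rw [← fall2_cast']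
    ring]
  rw [integral_div, tauN]

end SuperpositionKConn

namespace SuperpositionKConn

open scoped ENNReal

variable {n : ℕ}

lemma commDeg_zero_iff (ω : CommSpace n) (v : Fin n) :
    commDeg ω v = 0 ↔ ∀ w, ¬ commAdj ω v w := by
  unfold commDeg
  rw [Set.ncard_eq_zero (Set.toFinite _), Set.eq_empty_iff_forall_notMem]
  rfl

lemma commDeg_one_to_adj {ω : CommSpace n} {v : Fin n} (h : commDeg ω v = 1) :
    ∃ w, commAdj ω v w := by
  unfold commDeg at h
  obtain ⟨w, hw⟩ := Set.ncard_eq_one.mp h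
  rw [Set.ext_iff] at hw
  exact ⟨w, (hw w).mpr rfl⟩

lemma fall2_le {s : ℕ} (hs : s ≤ n) : fall2 s ≤ (n : ℝ) * (n : ℝ) := by
  rw [← fall2_cast]
  exact_mod_cast Nat.mul_le_mul hs (by omega)

theorem single_community_joint_degree_probabilities'
    (μ : Measure (ℕ × ℝ)) [IsProbabilityMeasure μ]
    (hQ : ∀ᵐ p ∂μ, p.2 ∈ Set.Icc (0 : ℝ) 1)
    (hn : 2 ≤ n) (u v : Fin n) (huv : u ≠ v) :
    (commMeasure μ n {ω : CommSpace n | commDeg ω v = 1 ∧ commDeg ω u = 1}).toReal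
        ≤ (∫ p, (min p.1 n : ℝ) ^ 2 * p.2 ∂μ) / n ∧
    (commMeasure μ n {ω : CommSpace n | commDeg ω v = 1 ∧ commDeg ω u = 0}).toReal
        ≤ tauN μ n / n ∧
    ∃ Δ : ℝ, 0 ≤ Δ ∧
      Δ ≤ ∫ p, fall2 (min p.1 n) * (1 - (1 - p.2) ^ (min p.1 n - 1)) ∂μ ∧
      (commMeasure μ n {ω : CommSpace n | commDeg ω v = 0 ∧ commDeg ω u = 0}).toReal
        = 1 - 2 * kappaN μ n / n + Δ / ((n : ℝ) * ((n : ℝ) - 1)) := by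
  have hn0 : 0 < n := by omega
  have hnR : (2 : ℝ) ≤ (n : ℝ) := by exact_mod_cast hn
  have hnpos : (0 : ℝ) < (n : ℝ) := by linarith
  have hcpos : (0 : ℝ) < (n : ℝ) * ((n : ℝ) - 1) := by nlinarith
  have hvu : v ≠ u := fun h => huv h.symm
  have hPB := prob_inComm_exists_adj μ hQ hn u v hvu
  set IB := ∫ p, fall2 (min p.1 n) * (1 - (1 - p.2) ^ (min p.1 n - 1)) ∂μ with hIB
  -- pieces about the IB integrand
  have hg1meas : Measurable fun p : ℕ × ℝ =>
      fall2 (min p.1 n) * (1 - (1 - p.2) ^ (min p.1 n - 1)) / ((n : ℝ) * ((n : ℝ) - 1)) :=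
    measurable_natprod (g := fun k q =>
        fall2 (min k n) * (1 - (1 - q) ^ (min k n - 1)) / ((n : ℝ) * ((n : ℝ) - 1)))
      fun k => (((measurable_const.sub
        ((measurable_const.sub measurable_id).pow_const _)).const_mul _).div_const _)
  refine ⟨?_, ?_, ?_⟩
  · -- part (a)
    have hsub : {ω : CommSpace n | commDeg ω v = 1 ∧ commDeg ω u = 1}
        ⊆ {ω : CommSpace n | inComm ω u ∧ ∃ w, commAdj ω v w} := by
      rintro ω ⟨h1, h2⟩
      obtain ⟨w, hw⟩ := commDeg_one_to_adj h2
      exact ⟨hw.2.1, commDeg_one_to_adj h1⟩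
    have hle : (commMeasure μ n {ω : CommSpace n | commDeg ω v = 1 ∧ commDeg ω u = 1}).toReal
        ≤ (commMeasure μ n {ω : CommSpace n | inComm ω u ∧ ∃ w, commAdj ω v w}).toReal :=
      ENNReal.toReal_mono (measure_ne_top _ _) (measure_mono hsub)
    refine le_trans (hle.trans_eq hPB) ?_
    -- IB / (n(n-1)) ≤ (∫ s² q)/n
    rw [show IB / ((n : ℝ) * ((n : ℝ) - 1))
        = ∫ p, fall2 (min p.1 n) * (1 - (1 - p.2) ^ (min p.1 n - 1))
            / ((n : ℝ) * ((n : ℝ) - 1)) ∂μ from (integral_div _ _).symm,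
      show (∫ p, (min p.1 n : ℝ) ^ 2 * p.2 ∂μ) / n
        = ∫ p, (min p.1 n : ℝ) ^ 2 * p.2 / n ∂μ from (integral_div _ _).symm]
    have hg2meas : Measurable fun p : ℕ × ℝ => (min p.1 n : ℝ) ^ 2 * p.2 / n :=
      measurable_natprod (g := fun k q => (min k n : ℝ) ^ 2 * q / n)
        fun k => (measurable_id.const_mul _).div_const _
    have hint1 : Integrable (fun p : ℕ × ℝ =>
        fall2 (min p.1 n) * (1 - (1 - p.2) ^ (min p.1 n - 1)) / ((n : ℝ) * ((n : ℝ) - 1))) μ := by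
      apply Integrable.mono' (integrable_const ((n : ℝ) * (n : ℝ)))
        hg1meas.aestronglyMeasurable
      filter_upwards [hQ] with p hp
      have hfh : (1 - (1 - p.2) ^ (min p.1 n - 1)) = hfun (min p.1 n) p.2 := rfl
      have h1 : 0 ≤ fall2 (min p.1 n) * (1 - (1 - p.2) ^ (min p.1 n - 1)) := by
        rw [hfh]
        exact mul_nonneg (fall2_nonneg _) (hfun_nonneg hp.1 hp.2)
      have h2 : fall2 (min p.1 n) * (1 - (1 - p.2) ^ (min p.1 n - 1)) ≤ (n : ℝ) * n := by
        rw [hfh]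
        calc fall2 (min p.1 n) * hfun (min p.1 n) p.2
            ≤ ((n : ℝ) * n) * 1 := mul_le_mul (fall2_le (min_le_right _ _))
              (hfun_le_one hp.2) (hfun_nonneg hp.1 hp.2) (by positivity)
        _ = (n : ℝ) * n := mul_one _
      rw [Real.norm_eq_abs, abs_of_nonneg (div_nonneg h1 hcpos.le)]
      calc fall2 (min p.1 n) * (1 - (1 - p.2) ^ (min p.1 n - 1)) / ((n : ℝ) * ((n : ℝ) - 1))
          ≤ fall2 (min p.1 n) * (1 - (1 - p.2) ^ (min p.1 n - 1)) :=
            div_le_self h1 (by nlinarith)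
      _ ≤ (n : ℝ) * n := h2
    have hint2 : Integrable (fun p : ℕ × ℝ => (min p.1 n : ℝ) ^ 2 * p.2 / n) μ := by
      apply Integrable.mono' (integrable_const ((n : ℝ))) hg2meas.aestronglyMeasurable
      filter_upwards [hQ] with p hp
      have hm0 : (0 : ℝ) ≤ min (p.1 : ℝ) (n : ℝ) := le_min (Nat.cast_nonneg _) hnpos.le
      have hmn : min (p.1 : ℝ) (n : ℝ) ≤ (n : ℝ) := min_le_right _ _
      rw [Real.norm_eq_abs,
        abs_of_nonneg (div_nonneg (mul_nonneg (pow_nonneg hm0 2) hp.1) hnpos.le),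
        div_le_iff₀ hnpos]
      nlinarith [hp.1, hp.2]
    apply integral_mono_ae hint1 hint2
    filter_upwards [hQ] with p hp
    -- pointwise inequality
    set s := min p.1 n with hs
    have hsn : s ≤ n := min_le_right _ _
    have hminR : min (p.1 : ℝ) (n : ℝ) = ((s : ℕ) : ℝ) := (Nat.cast_min p.1 n).symm
    have hfh : (1 - (1 - p.2) ^ (s - 1)) = hfun s p.2 := rfl
    set a := ((s - 1 : ℕ) : ℝ) with ha
    have ha0 : 0 ≤ a := Nat.cast_nonneg _
    have has : a ≤ (s : ℝ) := by
      rw [ha]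
      exact_mod_cast (by omega : s - 1 ≤ s)
    have han : a ≤ (n : ℝ) - 1 := by
      rw [ha]
      have : ((s - 1 : ℕ) : ℝ) ≤ ((n - 1 : ℕ) : ℝ) := by exact_mod_cast (by omega : s - 1 ≤ n - 1)
      have hcast : ((n - 1 : ℕ) : ℝ) = (n : ℝ) - 1 := by
        push_cast [Nat.cast_sub (by omega : 1 ≤ n)]; ring
      linarith [hcast ▸ this]
    have hh0 : 0 ≤ hfun s p.2 := hfun_nonneg hp.1 hp.2
    have hhle : hfun s p.2 ≤ a * p.2 := hfun_le hp.2
    have hfall : fall2 s = (s : ℝ) * a := (fall2_cast' s).symm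
    rw [hfh, hminR, hfall, div_le_div_iff₀ hcpos hnpos]
    have hs0 : (0 : ℝ) ≤ (s : ℝ) := Nat.cast_nonneg _
    have hsnR : (s : ℝ) ≤ (n : ℝ) := by exact_mod_cast hsn
    have t1 : (s : ℝ) * a * (n : ℝ) * hfun s p.2 ≤ (s : ℝ) * a * (n : ℝ) * (a * p.2) :=
      mul_le_mul_of_nonneg_left hhle (by positivity)
    have t2 : a * a ≤ (s : ℝ) * ((n : ℝ) - 1) :=
      mul_le_mul has han ha0 hs0
    have t3 : (s : ℝ) * (a * a) * p.2 * (n : ℝ) ≤ (s : ℝ) * ((s : ℝ) * ((n : ℝ) - 1)) * p.2 * (n : ℝ) := by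
      have h4 := mul_le_mul_of_nonneg_right (mul_le_mul_of_nonneg_left t2 hs0) hp.1
      exact mul_le_mul_of_nonneg_right h4 hnpos.le
    nlinarith [t1, t3]
  · -- part (b)
    have hsub : {ω : CommSpace n | commDeg ω v = 1 ∧ commDeg ω u = 0}
        ⊆ {ω : CommSpace n | commDeg ω v = 1} := fun ω h => h.1
    have hle := ENNReal.toReal_mono (measure_ne_top (commMeasure μ n)
      {ω : CommSpace n | commDeg ω v = 1}) (measure_mono hsub)
    rw [prob_deg_one μ hQ hn0 v] at hle
    exact hle
  · -- part (c)
    have hmv := measurableSet_exists_adj (n := n) v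
    have hmu := measurableSet_exists_adj (n := n) u
    have hcompl : {ω : CommSpace n | commDeg ω v = 0 ∧ commDeg ω u = 0}
        = ({ω : CommSpace n | ∃ w, commAdj ω v w} ∪ {ω : CommSpace n | ∃ w, commAdj ω u w})ᶜ := by
      ext ω
      simp only [Set.mem_setOf_eq, Set.mem_compl_iff, Set.mem_union, not_or, not_exists,
        commDeg_zero_iff]
    have hr0 : {ω : CommSpace n | ∃ w, commAdj ω v w} ∩ {ω : CommSpace n | ∃ w, commAdj ω u w}
        ⊆ {ω : CommSpace n | inComm ω u ∧ ∃ w, commAdj ω v w} := by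
      rintro ω ⟨⟨w1, h1⟩, ⟨w2, h2⟩⟩
      exact ⟨h2.2.1, ⟨w1, h1⟩⟩
    set r := (commMeasure μ n ({ω : CommSpace n | ∃ w, commAdj ω v w}
      ∩ {ω : CommSpace n | ∃ w, commAdj ω u w})).toReal with hrdef
    have hr_nonneg : 0 ≤ r := ENNReal.toReal_nonneg
    refine ⟨(n : ℝ) * ((n : ℝ) - 1) * r, by positivity, ?_, ?_⟩
    · -- Δ ≤ IB
      have h1 : r ≤ IB / ((n : ℝ) * ((n : ℝ) - 1)) := by
        rw [← hPB]
        exact ENNReal.toReal_mono (measure_ne_top _ _) (measure_mono hr0)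
      calc (n : ℝ) * ((n : ℝ) - 1) * r
          ≤ (n : ℝ) * ((n : ℝ) - 1) * (IB / ((n : ℝ) * ((n : ℝ) - 1))) :=
            mul_le_mul_of_nonneg_left h1 hcpos.le
      _ = IB := by have : (n : ℝ) - 1 ≠ 0 := by linarith
                   field_simp
    · -- the equality
      have hunion_meas : MeasurableSet ({ω : CommSpace n | ∃ w, commAdj ω v w}
          ∪ {ω : CommSpace n | ∃ w, commAdj ω u w}) := hmv.union hmu
      have hPcompl := prob_compl_eq_one_sub (μ := commMeasure μ n) hunion_meas
      have hIE := measure_union_add_inter (μ := commMeasure μ n)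
        {ω : CommSpace n | ∃ w, commAdj ω v w} hmu
      have hIEr : (commMeasure μ n ({ω : CommSpace n | ∃ w, commAdj ω v w}
            ∪ {ω : CommSpace n | ∃ w, commAdj ω u w})).toReal + r
          = (commMeasure μ n {ω : CommSpace n | ∃ w, commAdj ω v w}).toReal
            + (commMeasure μ n {ω : CommSpace n | ∃ w, commAdj ω u w}).toReal := by
        rw [hrdef, ← ENNReal.toReal_add (measure_ne_top _ _) (measure_ne_top _ _),
          ← ENNReal.toReal_add (measure_ne_top _ _) (measure_ne_top _ _), hIE]
      have hPv := prob_exists_adj μ hQ hn0 v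
      have hPu := prob_exists_adj μ hQ hn0 u
      rw [hcompl, hPcompl, ENNReal.toReal_sub_of_le prob_le_one ENNReal.one_ne_top,
        ENNReal.toReal_one]
      have hr2 : (n : ℝ) * ((n : ℝ) - 1) * r / ((n : ℝ) * ((n : ℝ) - 1)) = r := by
        have : (n : ℝ) - 1 ≠ 0 := by linarith
        field_simp
      rw [hr2, show (2:ℝ) * kappaN μ n / (n : ℝ) = 2 * (kappaN μ n / (n : ℝ)) by ring]
      linarith [hIEr, hPv, hPu]

end SuperpositionKConn

namespace SuperpositionKConn

/-- bounds and an expression for the joint degree probabilities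
`q₁ = P{d_1(v)=1, d_1(u)=1}`, `q₃ = P{d_1(v)=1, d_1(u)=0}`,
`q₂ = P{d_1(v)=0, d_1(u)=0}` in a single community graph. -/
theorem single_community_joint_degree_probabilities
    (μ : Measure (ℕ × ℝ)) [IsProbabilityMeasure μ]
    (hQ : ∀ᵐ p ∂μ, p.2 ∈ Set.Icc (0 : ℝ) 1)
    (n : ℕ) (hn : 2 ≤ n) (u v : Fin n) (huv : u ≠ v) :
    (commMeasure μ n {ω : CommSpace n | commDeg ω v = 1 ∧ commDeg ω u = 1}).toReal
        ≤ (∫ p, (min p.1 n : ℝ) ^ 2 * p.2 ∂μ) / n ∧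
    (commMeasure μ n {ω : CommSpace n | commDeg ω v = 1 ∧ commDeg ω u = 0}).toReal
        ≤ tauN μ n / n ∧
    ∃ Δ : ℝ, 0 ≤ Δ ∧
      Δ ≤ ∫ p, fall2 (min p.1 n) * (1 - (1 - p.2) ^ (min p.1 n - 1)) ∂μ ∧
      (commMeasure μ n {ω : CommSpace n | commDeg ω v = 0 ∧ commDeg ω u = 0}).toReal
        = 1 - 2 * kappaN μ n / n + Δ / ((n : ℝ) * ((n : ℝ) - 1)) := by
  exact single_community_joint_degree_probabilities' μ hQ hn u v huv

end SuperpositionKConn
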